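/- arXiv:2106.00154 — 2 statements merged into one kernel-verified Lean document; each statement's English description precedes it below -/
import Mathlib

section
/- Pair explanations in the NP-completeness construction: let k ≥ 1, let g : (Fin k → Bool) → (Fin k → Bool) → Bool be monotone, and let κ(x, y) = true iff (there exists i with x i = true and y i = true) or g x y = true. Consider the instance v = (1, 1) consisting of the all-true pair; then κ(v) = true, and for each i : Fin k the two-element feature set consisting of the i-th coordinate of the first component and the i-th coordinate of the second component is a weak AXp of κ at v. -/
/-- The classifier of the NP-completeness construction, on the feature space of
`2k` boolean features indexed by `Fin k ⊕ Fin k` (left indices address the first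
component `x`, right indices the second component `y`):
`κ w = true` iff (`∃ i, x i ∧ y i`) or `g x y = true`. -/
def pairClassifier {k : ℕ} (g : (Fin k → Bool) → (Fin k → Bool) → Bool) :
    ((Fin k ⊕ Fin k) → Bool) → Bool := fun w =>
  (decide (∃ i : Fin k, w (Sum.inl i) = true ∧ w (Sum.inr i) = true)) ||
    g (fun i => w (Sum.inl i)) (fun i => w (Sum.inr i))

/-- `X` is a weak AXp of classifier `κ` at instance `v`: every point of feature
space agreeing with `v` on all features in `X` gets prediction `κ v`. -/
def WeakAXp {k : ℕ} (κ : ((Fin k ⊕ Fin k) → Bool) → Bool)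
    (v : (Fin k ⊕ Fin k) → Bool) (X : Finset (Fin k ⊕ Fin k)) : Prop :=
  ∀ w : (Fin k ⊕ Fin k) → Bool, (∀ j ∈ X, w j = v j) → κ w = κ v

/-- For `k ≥ 1` and monotone `g`, at the all-true instance `v` the
constructed classifier predicts `true`, and for every `i : Fin k` the pair of
features `{inl i, inr i}` is a weak AXp. -/
theorem pair_sets_are_weak_AXps (k : ℕ) (hk : 1 ≤ k)
    (g : (Fin k → Bool) → (Fin k → Bool) → Bool)
    (hg : Monotone (fun p : (Fin k → Bool) × (Fin k → Bool) => g p.1 p.2)) :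
    pairClassifier g (fun _ => true) = true ∧
    ∀ i : Fin k,
      WeakAXp (pairClassifier g) (fun _ => true)
        ({Sum.inl i, Sum.inr i} : Finset (Fin k ⊕ Fin k)) := by
  have hv : pairClassifier g (fun _ => true) = true := by
    simp only [pairClassifier, Bool.or_eq_true, decide_eq_true_eq]
    exact Or.inl ⟨⟨0, hk⟩, trivial, trivial⟩
  refine ⟨hv, fun i w hw => ?_⟩
  rw [hv]
  have h1 : w (Sum.inl i) = true := hw _ (by simp)
  have h2 : w (Sum.inr i) = true := hw _ (by simp)
  simp only [pairClassifier, Bool.or_eq_true, decide_eq_true_eq]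
  exact Or.inl ⟨i, h1, h2⟩
end

section
/- Core equivalence of Theorem 3 (hardness of counting explanations): let k ≥ 1, let Φ : (Fin k → Bool) → Bool, let g be the canonical monotone extension of Φ (g x y = true iff there exists u with Φ u = true, u i = true implying x i = true, and u i = false implying y i = true), let κ(x, y) = true iff (there exists i with x i = true and y i = true) or g x y = true, and let v = (1, 1) be the all-true instance. Assume additionally that for every i : Fin k, neither the singleton set containing only the i-th left feature nor the singleton containing only the i-th right feature is a weak AXp of κ at v (this encodes that Φ is not trivially satisfiable). Then Φ is satisfiable if and only if the number of AXp's of κ at v is strictly greater than k. -/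
/-- The canonical monotone extension of `Φ`: `g x y = true` iff there exists `u`
with `Φ u = true`, `u i = true` implying `x i = true`, and `u i = false` implying
`y i = true`. -/
def canonExt {k : ℕ} (Φ : (Fin k → Bool) → Bool) :
    (Fin k → Bool) → (Fin k → Bool) → Bool := fun x y =>
  decide (∃ u : Fin k → Bool, Φ u = true ∧
    (∀ i, u i = true → x i = true) ∧ (∀ i, u i = false → y i = true))

/-- An AXp is a subset-minimal weak AXp. -/
def AXp {k : ℕ} (κ : ((Fin k ⊕ Fin k) → Bool) → Bool)
    (v : (Fin k ⊕ Fin k) → Bool) (X : Finset (Fin k ⊕ Fin k)) : Prop :=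
  WeakAXp κ v X ∧ ∀ X' ⊂ X, ¬ WeakAXp κ v X'

namespace Aux17

variable {k : ℕ} (Φ : (Fin k → Bool) → Bool)

def ind (X : Finset (Fin k ⊕ Fin k)) : (Fin k ⊕ Fin k) → Bool :=
  fun j => decide (j ∈ X)

lemma mono (w w' : (Fin k ⊕ Fin k) → Bool) (h : ∀ j, w j = true → w' j = true)
    (hw : pairClassifier (canonExt Φ) w = true) :
    pairClassifier (canonExt Φ) w' = true := by
  simp only [pairClassifier, canonExt, Bool.or_eq_true, decide_eq_true_eq] at hw ⊢
  rcases hw with ⟨i, h1, h2⟩ | ⟨u, hu, h1, h2⟩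
  · exact Or.inl ⟨i, h _ h1, h _ h2⟩
  · exact Or.inr ⟨u, hu, fun i hi => h _ (h1 i hi), fun i hi => h _ (h2 i hi)⟩

lemma kv (hk : 1 ≤ k) : pairClassifier (canonExt Φ) (fun _ => true) = true := by
  simp only [pairClassifier, Bool.or_eq_true, decide_eq_true_eq]
  exact Or.inl ⟨⟨0, hk⟩, trivial, trivial⟩

lemma weak_iff (hk : 1 ≤ k) (X : Finset (Fin k ⊕ Fin k)) :
    WeakAXp (pairClassifier (canonExt Φ)) (fun _ => true) X ↔
      pairClassifier (canonExt Φ) (ind X) = true := by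
  constructor
  · intro h
    have := h (ind X) (fun j hj => by simp [ind, hj])
    rw [this, kv Φ hk]
  · intro h w hw
    rw [kv Φ hk]
    refine mono Φ (ind X) w ?_ h
    intro j hj
    simp only [ind, decide_eq_true_eq] at hj
    exact hw j hj

lemma weak_mono {κ : ((Fin k ⊕ Fin k) → Bool) → Bool} {v : (Fin k ⊕ Fin k) → Bool}
    {X Y : Finset (Fin k ⊕ Fin k)} (hXY : X ⊆ Y) (h : WeakAXp κ v X) :
    WeakAXp κ v Y := fun w hw => h w (fun j hj => hw j (hXY hj))

def P (i : Fin k) : Finset (Fin k ⊕ Fin k) := {Sum.inl i, Sum.inr i}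

lemma weak_P (hk : 1 ≤ k) (i : Fin k) :
    WeakAXp (pairClassifier (canonExt Φ)) (fun _ => true) (P i) := by
  rw [weak_iff Φ hk]
  simp only [pairClassifier, Bool.or_eq_true, decide_eq_true_eq]
  exact Or.inl ⟨i, by simp [ind, P], by simp [ind, P]⟩

lemma axp_P (hk : 1 ≤ k)
    (hnt : ∀ i : Fin k,
      ¬ WeakAXp (pairClassifier (canonExt Φ)) (fun _ => true)
          ({Sum.inl i} : Finset (Fin k ⊕ Fin k)) ∧
      ¬ WeakAXp (pairClassifier (canonExt Φ)) (fun _ => true)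
          ({Sum.inr i} : Finset (Fin k ⊕ Fin k)))
    (i : Fin k) : AXp (pairClassifier (canonExt Φ)) (fun _ => true) (P i) := by
  refine ⟨weak_P Φ hk i, ?_⟩
  intro X' hX' hw
  have hsub := hX'.subset
  have hne := hX'.ne
  by_cases h1 : Sum.inl i ∈ X'
  · have h2 : Sum.inr i ∉ X' := by
      intro h2
      apply hne
      apply Finset.Subset.antisymm hsub
      intro j hj
      simp only [Aux17.P, Finset.mem_insert, Finset.mem_singleton] at hj
      rcases hj with rfl | rfl <;> assumption
    have : X' ⊆ {Sum.inl i} := by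
      intro j hj
      have := hsub hj
      simp only [Aux17.P, Finset.mem_insert, Finset.mem_singleton] at this
      rcases this with rfl | rfl
      · simp
      · exact absurd hj h2
    exact (hnt i).1 (weak_mono this hw)
  · have : X' ⊆ {Sum.inr i} := by
      intro j hj
      have := hsub hj
      simp only [Aux17.P, Finset.mem_insert, Finset.mem_singleton] at this
      rcases this with rfl | rfl
      · exact absurd hj h1
      · simp
    exact (hnt i).2 (weak_mono this hw)

lemma exists_axp_subset (κ : ((Fin k ⊕ Fin k) → Bool) → Bool)
    (v : (Fin k ⊕ Fin k) → Bool) :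
    ∀ X : Finset (Fin k ⊕ Fin k), WeakAXp κ v X → ∃ Y ⊆ X, AXp κ v Y := by
  intro X
  induction X using Finset.strongInductionOn with
  | _ X ih =>
    intro hX
    by_cases h : ∃ X' ⊂ X, WeakAXp κ v X'
    · obtain ⟨X', hsub, hX'⟩ := h
      obtain ⟨Y, hY, hA⟩ := ih X' hsub hX'
      exact ⟨Y, hY.trans hsub.subset, hA⟩
    · push_neg at h
      exact ⟨X, subset_rfl, hX, h⟩

lemma P_inj : Function.Injective (P (k := k)) := by
  intro i j hij
  have : Sum.inl i ∈ P j := hij ▸ (by simp [Aux17.P])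
  simp only [Aux17.P, Finset.mem_insert, Finset.mem_singleton] at this
  rcases this with h | h
  · exact Sum.inl.inj h
  · exact absurd h (by simp)

end Aux17

/-- Assuming no singleton feature set `{inl i}` or `{inr i}` is a
weak AXp of the constructed classifier at the all-true instance (encoding that `Φ`
is not trivially satisfiable), `Φ` is satisfiable iff the number of AXp's at the
all-true instance is strictly greater than `k`. -/
theorem satisfiable_iff_more_than_k_AXps (k : ℕ) (hk : 1 ≤ k)
    (Φ : (Fin k → Bool) → Bool)
    (hnt : ∀ i : Fin k,
      ¬ WeakAXp (pairClassifier (canonExt Φ)) (fun _ => true)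
          ({Sum.inl i} : Finset (Fin k ⊕ Fin k)) ∧
      ¬ WeakAXp (pairClassifier (canonExt Φ)) (fun _ => true)
          ({Sum.inr i} : Finset (Fin k ⊕ Fin k))) :
    (∃ u : Fin k → Bool, Φ u = true) ↔
      k < Nat.card {X : Finset (Fin k ⊕ Fin k) //
            AXp (pairClassifier (canonExt Φ)) (fun _ => true) X} := by
  set κ := pairClassifier (canonExt Φ) with hκ
  set v : (Fin k ⊕ Fin k) → Bool := fun _ => true with hv
  constructor
  · rintro ⟨u, hu⟩
    -- the set X_u
    set Xu : Finset (Fin k ⊕ Fin k) :=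
      Finset.univ.filter (fun j => Sum.elim u (fun i => ! u i) j = true) with hXu
    have hindl : ∀ i, Aux17.ind Xu (Sum.inl i) = u i := by
      intro i
      simp only [Aux17.ind, hXu, Finset.mem_filter, Finset.mem_univ, true_and, Sum.elim_inl]
      cases h : u i <;> simp
    have hindr : ∀ i, Aux17.ind Xu (Sum.inr i) = ! u i := by
      intro i
      simp only [Aux17.ind, hXu, Finset.mem_filter, Finset.mem_univ, true_and, Sum.elim_inr]
      cases h : u i <;> simp
    have hweak : WeakAXp κ v Xu := by
      rw [hκ, hv, Aux17.weak_iff Φ hk]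
      simp only [pairClassifier, canonExt, Bool.or_eq_true, decide_eq_true_eq]
      refine Or.inr ⟨u, hu, ?_, ?_⟩
      · intro i hi; rw [hindl i, hi]
      · intro i hi; rw [hindr i, hi]; rfl
    obtain ⟨Y, hYsub, hYaxp⟩ := Aux17.exists_axp_subset κ v Xu hweak
    have hYne : ∀ i, Y ≠ Aux17.P i := by
      intro i hYP
      have hl : Sum.inl i ∈ Xu := hYsub (hYP ▸ (by simp [Aux17.P] : Sum.inl i ∈ Aux17.P i))
      have hr : Sum.inr i ∈ Xu := hYsub (hYP ▸ (by simp [Aux17.P] : Sum.inr i ∈ Aux17.P i))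
      simp only [hXu, Finset.mem_filter, Finset.mem_univ, true_and, Sum.elim_inl,
        Sum.elim_inr] at hl hr
      rw [hl] at hr
      simp at hr
    -- injection from Option (Fin k)
    let f : Option (Fin k) → {X : Finset (Fin k ⊕ Fin k) // AXp κ v X} :=
      fun o => o.elim ⟨Y, hYaxp⟩ (fun i => ⟨Aux17.P i, Aux17.axp_P Φ hk hnt i⟩)
    have hf : Function.Injective f := by
      intro a b hab
      match a, b with
      | none, none => rfl
      | some i, some j =>
        have : Aux17.P i = Aux17.P j := congrArg Subtype.val hab
        exact congrArg some (Aux17.P_inj this)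
      | none, some j =>
        exact absurd (congrArg Subtype.val hab) (hYne j)
      | some i, none =>
        exact absurd (congrArg Subtype.val hab).symm (hYne i)
    have := Nat.card_le_card_of_injective f hf
    simp only [Nat.card_eq_fintype_card, Fintype.card_option, Fintype.card_fin] at this
    omega
  · intro hcard
    let f : Fin k → {X : Finset (Fin k ⊕ Fin k) // AXp κ v X} :=
      fun i => ⟨Aux17.P i, Aux17.axp_P Φ hk hnt i⟩
    have hf : Function.Injective f := by
      intro i j hij
      exact Aux17.P_inj (congrArg Subtype.val hij)
    have hnsurj : ¬ Function.Surjective f := by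
      intro hsurj
      have := Nat.card_eq_of_bijective f ⟨hf, hsurj⟩
      simp only [Nat.card_eq_fintype_card, Fintype.card_fin] at this
      omega
    simp only [Function.Surjective, not_forall, not_exists] at hnsurj
    obtain ⟨Z, hZ⟩ := hnsurj
    have hZne : ∀ i, Z.1 ≠ Aux17.P i := by
      intro i h
      exact hZ i (Subtype.ext h.symm)
    have hZweak : κ (Aux17.ind Z.1) = true := (Aux17.weak_iff Φ hk Z.1).mp Z.2.1
    simp only [hκ] at hZweak
    simp only [pairClassifier, canonExt, Bool.or_eq_true, decide_eq_true_eq] at hZweak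
    rcases hZweak with ⟨i, h1, h2⟩ | ⟨u, hu, _, _⟩
    · exfalso
      simp only [Aux17.ind, decide_eq_true_eq] at h1 h2
      have hPsub : Aux17.P i ⊆ Z.1 := by
        intro j hj
        simp only [Aux17.P, Finset.mem_insert, Finset.mem_singleton] at hj
        rcases hj with rfl | rfl <;> assumption
      have hPss : Aux17.P i ⊂ Z.1 := hPsub.ssubset_of_ne (fun h => hZne i h.symm)
      exact Z.2.2 (Aux17.P i) hPss (Aux17.weak_P Φ hk i)
    · exact ⟨u, hu⟩
end
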